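/- arXiv:0710.2574 — 2 statements merged into one kernel-verified Lean document; each statement's English description precedes it below -/
import Mathlib

section
/- Let f : [0,∞) → ℝ be differentiable with f'(t) ≥ f(t)(f(t) - r) for all t, f(0) ≥ 2σ, where r < 0 and σ < 0 with 2σ ≤ r. Then f(t) ≥ r/(1 - (1 - r/(2σ)) e^{rt}) for all t ≥ 0. -/
open Set Real

/-!
The comparison function `s` solves the Riccati equation `s' = s (s - r)`, starts at `2σ ≤ f 0`
and stays negative. The gap `g = f - s` satisfies `g' ≥ g (f + s - r)`, and wherever `g < 0` we
have `f < s < 0`, so `f + s - r ≤ -r` and hence `g' ≥ -r g`. A linear differential inequality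
of this kind, valid only where `g < 0`, cannot push `g` below zero.
-/

theorem nonneg_of_deriv_ge_mul_of_neg {g g' : ℝ → ℝ} {a b K : ℝ}
    (hg : ContinuousOn g (Icc a b))
    (hg' : ∀ x ∈ Ico a b, HasDerivWithinAt g (g' x) (Ici x) x)
    (ha : 0 ≤ g a) (bound : ∀ x ∈ Ico a b, g x < 0 → K * g x ≤ g' x) :
    ∀ ⦃x⦄, x ∈ Icc a b → 0 ≤ g x := by
  intro x hx
  -- The barrier `ε e^{(K+1)(x-a)}` grows faster than `-g` is allowed to where they touch.
  have barrier : ∀ ε > 0, -g x ≤ ε * exp ((K + 1) * (x - a)) := by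
    intro ε hε
    have hB : ∀ y, HasDerivAt (fun y => ε * exp ((K + 1) * (y - a)))
        (ε * exp ((K + 1) * (y - a)) * (K + 1)) y := fun y => by
      simpa [mul_assoc] using
        (((hasDerivAt_id y).sub_const a).const_mul (K + 1)).exp.const_mul ε
    refine image_le_of_deriv_right_lt_deriv_boundary' (f := fun y => -g y) hg.neg
      (fun y hy => (hg' y hy).neg)
      (by simp only [sub_self, mul_zero, exp_zero, mul_one]; linarith) (by fun_prop)
      (fun y _ => (hB y).hasDerivWithinAt) (fun y hy hgy => ?_) hx
    have hpos : 0 < ε * exp ((K + 1) * (y - a)) := by positivity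
    have hgy : g y = -(ε * exp ((K + 1) * (y - a))) := by linarith
    have := bound y hy (by linarith)
    rw [hgy] at this
    linarith
  have hE := exp_pos ((K + 1) * (x - a))
  refine neg_nonpos.mp (le_of_forall_pos_le_add fun δ hδ => ?_)
  simpa [div_mul_cancel₀ _ hE.ne'] using barrier (δ / exp ((K + 1) * (x - a))) (by positivity)

theorem le_of_riccati_comparison {f f' s s' : ℝ → ℝ} {a b r : ℝ}
    (hf : ContinuousOn f (Icc a b)) (hf' : ∀ x ∈ Ico a b, HasDerivWithinAt f (f' x) (Ici x) x)
    (hs : ContinuousOn s (Icc a b)) (hs' : ∀ x ∈ Ico a b, HasDerivWithinAt s (s' x) (Ici x) x)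
    (hf_super : ∀ x ∈ Ico a b, f x * (f x - r) ≤ f' x)
    (hs_sub : ∀ x ∈ Ico a b, s' x ≤ s x * (s x - r))
    (hs_nonpos : ∀ x ∈ Ico a b, s x ≤ 0) (ha : s a ≤ f a) :
    ∀ ⦃x⦄, x ∈ Icc a b → s x ≤ f x := by
  intro x hx
  have bound : ∀ y ∈ Ico a b, f y - s y < 0 → -r * (f y - s y) ≤ f' y - s' y := by
    intro y hy hlt
    nlinarith [hf_super y hy, hs_sub y hy, hs_nonpos y hy]
  have := nonneg_of_deriv_ge_mul_of_neg (g := fun y => f y - s y) (hf.sub hs)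
    (fun y hy => (hf' y hy).sub (hs' y hy)) (sub_nonneg.mpr ha) bound hx
  linarith

theorem hasDerivAt_div_one_sub_mul_exp {r c t : ℝ} (hD : 1 - c * exp (r * t) ≠ 0) :
    HasDerivAt (fun t => r / (1 - c * exp (r * t)))
      (r / (1 - c * exp (r * t)) * (r / (1 - c * exp (r * t)) - r)) t := by
  have hexp : HasDerivAt (fun t => 1 - c * exp (r * t)) (-(c * (exp (r * t) * r))) t := by
    simpa using (((hasDerivAt_id t).const_mul r).exp.const_mul c).const_sub 1
  refine ((hasDerivAt_const t r).div hexp hD).congr_deriv ?_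
  field_simp
  ring

theorem ode_comparison_general (r σ : ℝ) (hr : r < 0) (hσ : σ < 0)
    (f f' : ℝ → ℝ)
    (hderiv : ∀ t : ℝ, 0 ≤ t → HasDerivAt f (f' t) t)
    (hineq : ∀ t : ℝ, 0 ≤ t → f t * (f t - r) ≤ f' t)
    (h0 : 2 * σ ≤ f 0) :
    ∀ t : ℝ, 0 ≤ t → r / (1 - (1 - r / (2 * σ)) * Real.exp (r * t)) ≤ f t := by
  intro t ht
  set c := 1 - r / (2 * σ)
  have hc : c < 1 := by
    have : 0 < r / (2 * σ) := div_pos_of_neg_of_neg hr (by linarith)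
    linarith
  have hD : ∀ x, 0 ≤ x → 0 < 1 - c * exp (r * x) := fun x hx => by
    have : exp (r * x) ≤ 1 := exp_le_one_iff.mpr (mul_nonpos_of_nonpos_of_nonneg hr.le hx)
    nlinarith [exp_pos (r * x)]
  have hs' : ∀ x, 0 ≤ x → HasDerivAt (fun t => r / (1 - c * exp (r * t)))
      (r / (1 - c * exp (r * x)) * (r / (1 - c * exp (r * x)) - r)) x :=
    fun x hx => hasDerivAt_div_one_sub_mul_exp (hD x hx).ne'
  have hs0 : r / (1 - c * exp (r * 0)) = 2 * σ := by
    simp only [c, mul_zero, exp_zero, mul_one, sub_sub_cancel]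
    field_simp [hr.ne]
  refine le_of_riccati_comparison (a := 0) (b := t)
    (fun x hx => (hderiv x hx.1).continuousAt.continuousWithinAt)
    (fun x hx => (hderiv x hx.1).hasDerivWithinAt)
    (fun x hx => (hs' x hx.1).continuousAt.continuousWithinAt)
    (fun x hx => (hs' x hx.1).hasDerivWithinAt)
    (fun x hx => hineq x hx.1) (fun x _ => le_rfl)
    (fun x hx => (div_neg_of_neg_of_pos hr (hD x hx.1)).le) (hs0.trans_le h0) ⟨ht, le_rfl⟩

/-- ODE comparison: if `f' ≥ f (f - r)` on `[0,∞)` and `f 0 ≥ 2σ`, with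
`r < 0`, `σ < 0`, `2σ ≤ r`, then `f t ≥ r/(1-(1-r/(2σ))e^{rt})` for all `t ≥ 0`. -/
theorem ode_comparison (r σ : ℝ) (hr : r < 0) (hσ : σ < 0) (h2σ : 2 * σ ≤ r)
    (f f' : ℝ → ℝ)
    (hderiv : ∀ t : ℝ, 0 ≤ t → HasDerivAt f (f' t) t)
    (hineq : ∀ t : ℝ, 0 ≤ t → f t * (f t - r) ≤ f' t)
    (h0 : 2 * σ ≤ f 0) :
    ∀ t : ℝ, 0 ≤ t → r / (1 - (1 - r / (2 * σ)) * Real.exp (r * t)) ≤ f t :=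
  ode_comparison_general r σ hr hσ f f' hderiv hineq h0
end

section
/- Let r < 0, σ < 0, a = r/(2σ) ∈ (0,1), and λ₀ > 0. If a function λ satisfies λ(t) = λ₀ exp(∫₀ᵗ F(τ)dτ) with F(τ) ≥ s(τ) - r where s(τ) = r/(1-(1-a)e^{rτ}), and λ(t) → λ∞, then λ₀ ≤ λ∞ · (2σ/r). In particular, with λ₀ = λ_g, λ∞ = λ_h, σ a lower bound for the Gauss curvature of g, and r/2 = κ_h the constant curvature of h, one gets λ_g ≤ (λ_h/κ_h)·σ. -/
/-!
With `D τ = 1 - (1 - a) e^{rτ}` one has `D 0 = a`, `a ≤ D τ ≤ 1` for `τ ≥ 0`, and `s - r = r / D - r`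
is the derivative of `-log D`. Hence `∫₀ᵗ F ≥ log a - log D(t) ≥ log a`, so `λ(t) ≥ a λ₀` for all
`t ≥ 0`, and in the limit `λ∞ ≥ a λ₀ = λ₀ r / (2σ)`.
-/

open Real Set Filter MeasureTheory intervalIntegral

lemma hasDerivAt_neg_log_one_sub_mul_exp {c r τ : ℝ} (h : 1 - c * exp (r * τ) ≠ 0) :
    HasDerivAt (fun τ => -log (1 - c * exp (r * τ))) (r / (1 - c * exp (r * τ)) - r) τ := by
  have hexp : HasDerivAt (fun τ => exp (r * τ)) (exp (r * τ) * r) τ := by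
    simpa using ((hasDerivAt_id τ).const_mul r).exp
  have hderiv : r / (1 - c * exp (r * τ)) - r
      = -(-(c * (exp (r * τ) * r)) / (1 - c * exp (r * τ))) := by
    field_simp
    ring
  rw [hderiv]
  exact (((hexp.const_mul c).const_sub 1).log h).neg

lemma one_sub_mul_exp_mem_Icc {a r τ : ℝ} (ha : a ≤ 1) (hr : r ≤ 0) (hτ : 0 ≤ τ) :
    1 - (1 - a) * exp (r * τ) ∈ Icc a 1 := by
  have hexp_le : exp (r * τ) ≤ 1 := exp_le_one_iff.2 (mul_nonpos_of_nonpos_of_nonneg hr hτ)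
  constructor <;> nlinarith [exp_pos (r * τ)]

lemma one_sub_mul_exp_ne_zero {a r t τ : ℝ} (ha0 : 0 < a) (ha1 : a ≤ 1) (hr : r ≤ 0)
    (ht : 0 ≤ t) (hτ : τ ∈ uIcc 0 t) : 1 - (1 - a) * exp (r * τ) ≠ 0 := by
  rw [uIcc_of_le ht] at hτ
  exact (ha0.trans_le (one_sub_mul_exp_mem_Icc ha1 hr hτ.1).1).ne'

lemma intervalIntegrable_div_one_sub_mul_exp_sub {a r t : ℝ} (ha0 : 0 < a) (ha1 : a ≤ 1)
    (hr : r ≤ 0) (ht : 0 ≤ t) :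
    IntervalIntegrable (fun τ => r / (1 - (1 - a) * exp (r * τ)) - r) volume 0 t :=
  ((continuousOn_const.div (by fun_prop) fun _ hτ => one_sub_mul_exp_ne_zero ha0 ha1 hr ht hτ).sub
    continuousOn_const).intervalIntegrable

lemma integral_div_one_sub_mul_exp_sub {a r t : ℝ} (ha0 : 0 < a) (ha1 : a ≤ 1) (hr : r ≤ 0)
    (ht : 0 ≤ t) :
    ∫ τ in (0:ℝ)..t, (r / (1 - (1 - a) * exp (r * τ)) - r)
      = log a - log (1 - (1 - a) * exp (r * t)) := by
  rw [integral_eq_sub_of_hasDerivAt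
    (fun _ hτ => hasDerivAt_neg_log_one_sub_mul_exp (one_sub_mul_exp_ne_zero ha0 ha1 hr ht hτ))
    (intervalIntegrable_div_one_sub_mul_exp_sub ha0 ha1 hr ht)]
  simp only [mul_zero, exp_zero, mul_one, sub_sub_cancel, sub_neg_eq_add]
  ring

lemma log_le_integral_of_forall_le {a r t : ℝ} {F : ℝ → ℝ} (ha0 : 0 < a) (ha1 : a ≤ 1)
    (hr : r ≤ 0) (ht : 0 ≤ t) (hF : IntervalIntegrable F volume 0 t)
    (hFbd : ∀ τ ∈ Icc 0 t, r / (1 - (1 - a) * exp (r * τ)) - r ≤ F τ) :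
    log a ≤ ∫ τ in (0:ℝ)..t, F τ := by
  have hD_le : log (1 - (1 - a) * exp (r * t)) ≤ 0 := by
    obtain ⟨hD_ge, hD_le⟩ := one_sub_mul_exp_mem_Icc ha1 hr ht
    exact log_nonpos (by linarith) hD_le
  calc log a ≤ log a - log (1 - (1 - a) * exp (r * t)) := by linarith
    _ = ∫ τ in (0:ℝ)..t, (r / (1 - (1 - a) * exp (r * τ)) - r) :=
      (integral_div_one_sub_mul_exp_sub ha0 ha1 hr ht).symm
    _ ≤ ∫ τ in (0:ℝ)..t, F τ := integral_mono_on ht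
      (intervalIntegrable_div_one_sub_mul_exp_sub ha0 ha1 hr ht) hF hFbd

lemma mul_exp_le_of_tendsto {lam₀ lam_inf c : ℝ} {G lam : ℝ → ℝ} (hlam₀ : 0 ≤ lam₀)
    (hG : ∀ t, 0 ≤ t → c ≤ G t) (hlam : ∀ t, 0 ≤ t → lam t = lam₀ * exp (G t))
    (hlim : Tendsto lam atTop (nhds lam_inf)) :
    lam₀ * exp c ≤ lam_inf :=
  ge_of_tendsto hlim <| eventually_atTop.2 ⟨0, fun t ht => by
    rw [hlam t ht]
    exact mul_le_mul_of_nonneg_left (exp_le_exp.2 (hG t ht)) hlam₀⟩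

/-- Abstract form of the Sharp Upper Bound theorem: if
`λ t = λ₀ exp(∫₀ᵗ F)` with `F τ ≥ s τ - r`, `s τ = r/(1-(1-a)e^{rτ})`,
`a = r/(2σ) ∈ (0,1)`, `λ₀ > 0`, and `λ t → λ∞`, then `λ₀ ≤ λ∞ · 2σ/r`. -/
theorem sharp_upper_bound_abstract (r σ lam₀ lam_inf : ℝ)
    (hr : r < 0) (hσ : σ < 0) (hlam₀ : 0 < lam₀)
    (a : ℝ) (haa : a = r / (2 * σ)) (ha : a ∈ Set.Ioo (0:ℝ) 1)
    (F : ℝ → ℝ) (hF : Continuous F)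
    (hFbd : ∀ τ : ℝ, 0 ≤ τ → r / (1 - (1 - a) * Real.exp (r * τ)) - r ≤ F τ)
    (lam : ℝ → ℝ)
    (hlam : ∀ t : ℝ, 0 ≤ t → lam t = lam₀ * Real.exp (∫ τ in (0:ℝ)..t, F τ))
    (hlim : Filter.Tendsto lam Filter.atTop (nhds lam_inf)) :
    lam₀ ≤ lam_inf * (2 * σ) / r := by
  obtain ⟨ha0, ha1⟩ := ha
  have hlog_le : ∀ t, 0 ≤ t → log a ≤ ∫ τ in (0:ℝ)..t, F τ := fun t ht =>
    log_le_integral_of_forall_le ha0 ha1.le hr.le ht (hF.intervalIntegrable 0 t)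
      fun τ hτ => hFbd τ hτ.1
  have hle : lam₀ * a ≤ lam_inf := by
    simpa [exp_log ha0] using mul_exp_le_of_tendsto hlam₀.le hlog_le hlam hlim
  rw [haa, mul_div_assoc', div_le_iff_of_neg (by linarith)] at hle
  rwa [le_div_iff_of_neg hr]
end
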